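/- Let P be a finite nonempty collection of cells and let [a,b] and [α,β] be inner intervals of P with a=(i,j), b=(k,l), β=b and α=(m,n)∈]a,b[; set c=(i,l), d=(k,j), γ=(m,l), δ=(k,n), h=(m,j) and r=(i,n). Let <^P be a P-order such that gcd(in(f_{a,b}), in(f_{α,β}))≠1. Then S(f_{a,b},f_{α,β}) reduces to 0 modulo G with respect to <^P_lex if and only if one of the following holds: (1) x_a x_γ x_δ <^P_lex x_α x_c x_d, and either both h <^P α and δ <^P α, or both h <^P d and δ <^P d; (2) x_a x_γ x_δ <^P_lex x_α x_c x_d, the set {r,h,a,α} is the vertex set of an inner interval of P, and either both r <^P α and γ <^P α, or both r <^P c and γ <^P c; (3) x_α x_c x_d <^P_lex x_a x_γ x_δ, and either both h <^P a and c <^P a, or both h <^P γ and c <^P γ; (4) x_α x_c x_d <^P_lex x_a x_γ x_δ, the set {r,h,a,α} is the vertex set of an inner interval of P, and either both r <^P a and d <^P a, or both r <^P δ and d <^P δ. -/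

import Mathlib

/-!
The gcd condition forces `in(f_{a,b}) = x_a x_b` and `in(f_{α,b}) = x_α x_b`, since `x_b` is the
only variable the two minors share; hence `S(f_{a,b}, f_{α,b}) = x_a x_γ x_δ - x_α x_c x_d`.
This binomial telescopes in two ways through inner 2-minors of subintervals of `[a,b]`:
`x_δ f_{a,γ} + x_c f_{h,δ}` (through `x_c x_h x_δ`) and `x_γ f_{a,δ} + x_d f_{r,γ}` (through
`x_r x_d x_γ`); either is a standard expression exactly when its middle monomial lies below the
leading one, which is the order condition in (1)-(4). Conversely, a standard expression needs an
inner 2-minor whose leading monomial divides that of the S-polynomial; the only candidates are the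
minors of `[h,δ]`, `[r,γ]`, `[a,b]` when the leading monomial is `x_α x_c x_d`, and of `[a,γ]`,
`[a,δ]`, `[α,b]` when it is `x_a x_γ x_δ`, the last of each list being excluded by the first step.
The corner condition in (2) and (4) always holds, as `[a,α] ⊆ [a,b]`.
-/

namespace ClosedPathPaper

open MvPolynomial

/-- Lattice points of `ℤ²`; a cell is identified with its lower left corner. -/
abbrev Pt : Type := ℤ × ℤ

/-- The four vertices (corners) of the unit cell with lower left corner `a`. -/
def cellVerts (a : Pt) : Set Pt :=
  {a, (a.1 + 1, a.2), (a.1, a.2 + 1), (a.1 + 1, a.2 + 1)}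

/-- The vertex set `V(P)` of a collection of cells `P`. -/
def VP (P : Finset Pt) : Set Pt := ⋃ a ∈ P, cellVerts a

/-- `[a,b]` is a proper interval and every cell contained in it belongs to `P`. -/
def IsInnerInterval (P : Finset Pt) (a b : Pt) : Prop :=
  a.1 < b.1 ∧ a.2 < b.2 ∧
    ∀ c : Pt, a.1 ≤ c.1 → c.1 < b.1 → a.2 ≤ c.2 → c.2 < b.2 → c ∈ P

/-- The four corners of the proper interval `[a,b]`:
diagonal corners `a, b` and anti-diagonal corners `c = (a.1, b.2)`, `d = (b.1, a.2)`. -/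
def cornersOf (a b : Pt) : Finset Pt := {a, b, (a.1, b.2), (b.1, a.2)}

/-- The inner 2-minor `f_{a,b} = x_a x_b - x_c x_d` attached to the inner interval `[a,b]`. -/
noncomputable def innerMinor (K : Type*) [Field K] (a b : Pt) : MvPolynomial Pt K :=
  X a * X b - X (a.1, b.2) * X (b.1, a.2)

/-- The set `G` of all inner 2-minors of `P`. -/
def minorsSet (K : Type*) [Field K] (P : Finset Pt) : Set (MvPolynomial Pt K) :=
  {f | ∃ a b : Pt, IsInnerInterval P a b ∧ f = innerMinor K a b}

/-- The polyomino ideal `I_P`. -/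
noncomputable def polyoIdeal (K : Type*) [Field K] (P : Finset Pt) :
    Ideal (MvPolynomial Pt K) :=
  Ideal.span (minorsSet K P)

/-! ### Monomial orders -/

/-- Strict lexicographic comparison of exponent vectors induced by the
(strict total) order `po` on the variables. -/
def lexLt (po : Pt → Pt → Prop) (u v : Pt →₀ ℕ) : Prop :=
  ∃ w : Pt, u w < v w ∧ ∀ w' : Pt, po w w' → u w' = v w'

def lexLe (po : Pt → Pt → Prop) (u v : Pt →₀ ℕ) : Prop := u = v ∨ lexLt po u v

/-- `m` is the leading monomial of `f` with respect to the lexicographic order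
induced by `po`. -/
def IsLM {K : Type*} [Field K] (po : Pt → Pt → Prop) (f : MvPolynomial Pt K)
    (m : Pt →₀ ℕ) : Prop :=
  m ∈ f.support ∧ ∀ m' ∈ f.support, lexLe po m' m

/-- `sp` is the S-polynomial of `f` and `g` with respect to the lexicographic
order induced by `po`. -/
def IsSPoly {K : Type*} [Field K] (po : Pt → Pt → Prop) (f g sp : MvPolynomial Pt K) : Prop :=
  ∃ mf mg : Pt →₀ ℕ, IsLM po f mf ∧ IsLM po g mg ∧
    sp = monomial (mf ⊔ mg - mf) (f.coeff mf)⁻¹ * f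
       - monomial (mf ⊔ mg - mg) (g.coeff mg)⁻¹ * g

/-- `h` has a standard expression with respect to `G`, i.e. `h` reduces to `0`
modulo `G` with respect to the lexicographic order induced by `po`. -/
def ReducesToZero {K : Type*} [Field K] (po : Pt → Pt → Prop)
    (G : Set (MvPolynomial Pt K)) (h : MvPolynomial Pt K) : Prop :=
  ∃ (F : Finset (MvPolynomial Pt K)) (q : MvPolynomial Pt K → MvPolynomial Pt K),
    ↑F ⊆ G ∧ h = ∑ g ∈ F, q g * g ∧
    ∀ g ∈ F, ∀ m, IsLM po (q g * g) m → ∃ mh, IsLM po h mh ∧ lexLe po m mh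

/-- The exponent vector of `x_u x_v x_w`. -/
noncomputable def mono3 (u v w : Pt) : Pt →₀ ℕ :=
  Finsupp.single u 1 + Finsupp.single v 1 + Finsupp.single w 1

/-- The leading monomials, viewed as polynomials, of the members of `G`. -/
def leadingMonomials {K : Type*} [Field K] (po : Pt → Pt → Prop)
    (G : Set (MvPolynomial Pt K)) : Set (MvPolynomial Pt K) :=
  {f | ∃ g ∈ G, ∃ m, IsLM po g m ∧ f = monomial m (1 : K)}

/-- The initial ideal of `I` with respect to the lexicographic order induced by `po`. -/
noncomputable def initialIdeal {K : Type*} [Field K] (po : Pt → Pt → Prop)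
    (I : Ideal (MvPolynomial Pt K)) : Ideal (MvPolynomial Pt K) :=
  Ideal.span (leadingMonomials po (I : Set (MvPolynomial Pt K)))

/-- `G` is a Gröbner basis of `I`. -/
def IsGroebnerBasis {K : Type*} [Field K] (po : Pt → Pt → Prop)
    (G : Set (MvPolynomial Pt K)) (I : Ideal (MvPolynomial Pt K)) : Prop :=
  Ideal.span G = I ∧ Ideal.span (leadingMonomials po G) = initialIdeal po I

/-- `G` is the reduced Gröbner basis of `I` (up to normalizing signs). -/
def IsReducedGroebnerBasis {K : Type*} [Field K] (po : Pt → Pt → Prop)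
    (G : Set (MvPolynomial Pt K)) (I : Ideal (MvPolynomial Pt K)) : Prop :=
  IsGroebnerBasis po G I ∧
  (∀ g ∈ G, ∃ m, IsLM po g m ∧ (g.coeff m = 1 ∨ g.coeff m = -1)) ∧
  (∀ g ∈ G, ∀ g' ∈ G, g' ≠ g → ∀ m ∈ g.support, ∀ m', IsLM po g' m' → ¬ m' ≤ m)

/-! ### Closed paths and special configurations -/

/-- Two cells share a common edge. -/
def cellAdj (a b : Pt) : Prop :=
  b = (a.1 + 1, a.2) ∨ b = (a.1 - 1, a.2) ∨ b = (a.1, a.2 + 1) ∨ b = (a.1, a.2 - 1)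

/-- `P` is a closed path polyomino. -/
def IsClosedPath (P : Finset Pt) : Prop :=
  ∃ n : ℕ, 5 < n ∧ ∃ A : ZMod n → Pt,
    Function.Injective A ∧
    (∀ i, cellAdj (A i) (A (i + 1))) ∧
    (∀ i j : ZMod n, j ≠ i - 2 → j ≠ i - 1 → j ≠ i → j ≠ i + 1 → j ≠ i + 2 →
      cellVerts (A i) ∩ cellVerts (A j) = ∅) ∧
    ∀ c : Pt, c ∈ P ↔ ∃ i, A i = c

/-- The horizontal block of rank `m` whose leftmost cell is `a`. -/
def hBlockCells (a : Pt) (m : ℕ) : Finset Pt :=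
  (Finset.range m).image fun t : ℕ => (a.1 + (t : ℤ), a.2)

/-- The vertical block of rank `m` whose bottom cell is `a`. -/
def vBlockCells (a : Pt) (m : ℕ) : Finset Pt :=
  (Finset.range m).image fun t : ℕ => (a.1, a.2 + (t : ℤ))

/-- The vertex set of a finite set of cells. -/
def vertsOfCells (s : Finset Pt) : Set Pt := ⋃ c ∈ s, cellVerts c

/-- A W-pentomino of `P`: a horizontal block of rank two with leftmost cell `a₁`, a
vertical block of rank two with bottom cell `a₂`, and a middle cell `A` not belonging to the
two blocks, such that the vertex sets of the two blocks meet exactly in the lower right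
corner of `A`. -/
def IsWPentomino (P : Finset Pt) (a₁ a₂ A : Pt) : Prop :=
  hBlockCells a₁ 2 ⊆ P ∧ vBlockCells a₂ 2 ⊆ P ∧ A ∈ P ∧
  A ∉ hBlockCells a₁ 2 ∪ vBlockCells a₂ 2 ∧
  vertsOfCells (hBlockCells a₁ 2) ∩ vertsOfCells (vBlockCells a₂ 2) = {(A.1 + 1, A.2)}

/-- An RW-heptomino of `P`: a horizontal block of rank three with leftmost cell `a₁`, a
vertical block of rank three with bottom cell `a₂`, and a middle cell `A` not belonging to
the two blocks, such that the vertex sets of the two blocks meet exactly in the upper left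
corner of `A`. -/
def IsRWHeptomino (P : Finset Pt) (a₁ a₂ A : Pt) : Prop :=
  hBlockCells a₁ 3 ⊆ P ∧ vBlockCells a₂ 3 ⊆ P ∧ A ∈ P ∧
  A ∉ hBlockCells a₁ 3 ∪ vBlockCells a₂ 3 ∧
  vertsOfCells (hBlockCells a₁ 3) ∩ vertsOfCells (vBlockCells a₂ 3) = {(A.1, A.2 + 1)}

/-- An LD-horizontal skew tetromino of `P` (base point `p`): the cells
`p, p+(1,0), p+(1,1), p+(2,1)`. -/
def IsLDhTetromino (P : Finset Pt) (p : Pt) : Prop :=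
  p ∈ P ∧ (p.1 + 1, p.2) ∈ P ∧ (p.1 + 1, p.2 + 1) ∈ P ∧ (p.1 + 2, p.2 + 1) ∈ P

/-- An LD-vertical skew tetromino of `P` (base point `p`): the cells
`p, p+(0,1), p+(1,1), p+(1,2)`. -/
def IsLDvTetromino (P : Finset Pt) (p : Pt) : Prop :=
  p ∈ P ∧ (p.1, p.2 + 1) ∈ P ∧ (p.1 + 1, p.2 + 1) ∈ P ∧ (p.1 + 1, p.2 + 2) ∈ P

/-- An LD-horizontal skew hexomino of `P` (base point `p`): the cells
`p, p+(1,0), p+(2,0), p+(2,1), p+(3,1), p+(4,1)`. -/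
def IsLDhHexomino (P : Finset Pt) (p : Pt) : Prop :=
  p ∈ P ∧ (p.1 + 1, p.2) ∈ P ∧ (p.1 + 2, p.2) ∈ P ∧
  (p.1 + 2, p.2 + 1) ∈ P ∧ (p.1 + 3, p.2 + 1) ∈ P ∧ (p.1 + 4, p.2 + 1) ∈ P

/-- An LD-vertical skew hexomino of `P` (base point `p`): the cells
`p, p+(0,1), p+(0,2), p+(1,2), p+(1,3), p+(1,4)`. -/
def IsLDvHexomino (P : Finset Pt) (p : Pt) : Prop :=
  p ∈ P ∧ (p.1, p.2 + 1) ∈ P ∧ (p.1, p.2 + 2) ∈ P ∧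
  (p.1 + 1, p.2 + 2) ∈ P ∧ (p.1 + 1, p.2 + 3) ∈ P ∧ (p.1 + 1, p.2 + 4) ∈ P

/-- The total order `<¹` on `ℤ²`. -/
def lt1 (a b : Pt) : Prop := a.1 < b.1 ∨ (a.1 = b.1 ∧ a.2 < b.2)

/-- The P-order `<^Y` attached to a set `Y` of vertices. -/
def Ylt (Y : Set Pt) (a b : Pt) : Prop :=
  (a ∉ Y ∧ b ∈ Y) ∨ (a ∉ Y ∧ b ∉ Y ∧ lt1 a b) ∨ (a ∈ Y ∧ b ∈ Y ∧ lt1 a b)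

theorem _root_.Finset.exists_forall_not_rel {α : Type*} {r : α → α → Prop} [IsStrictOrder α r]
    (s : Finset α) (hs : s.Nonempty) : ∃ a ∈ s, ∀ b ∈ s, ¬ r a b := by
  obtain ⟨a, ha, hmax⟩ := (Set.wellFoundedOn_iff.1 (s.wellFoundedOn (r := Function.swap r))).has_min
    s hs
  exact ⟨a, ha, fun b hb hab => hmax b hb ⟨hab, hb, ha⟩⟩

section Lex

variable {po : Pt → Pt → Prop}

theorem lexLt_irrefl (u : Pt →₀ ℕ) : ¬ lexLt po u u :=
  fun ⟨_, hw, _⟩ => hw.false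

theorem lexLt_trans [IsStrictTotalOrder Pt po] {u v t : Pt →₀ ℕ}
    (h₁ : lexLt po u v) (h₂ : lexLt po v t) : lexLt po u t := by
  obtain ⟨w₁, hlt₁, heq₁⟩ := h₁
  obtain ⟨w₂, hlt₂, heq₂⟩ := h₂
  rcases trichotomous_of po w₁ w₂ with h | rfl | h
  · exact ⟨w₂, heq₁ w₂ h ▸ hlt₂, fun w hw => (heq₁ w (trans_of po h hw)).trans (heq₂ w hw)⟩
  · exact ⟨w₁, hlt₁.trans hlt₂, fun w hw => (heq₁ w hw).trans (heq₂ w hw)⟩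
  · exact ⟨w₁, (heq₂ w₁ h) ▸ hlt₁, fun w hw => (heq₁ w hw).trans (heq₂ w (trans_of po h hw))⟩

theorem lexLt_trichotomous [IsStrictOrder Pt po] (u v : Pt →₀ ℕ) :
    lexLt po u v ∨ u = v ∨ lexLt po v u := by
  by_cases huv : u = v
  · exact Or.inr (Or.inl huv)
  obtain ⟨w, hw, hmax⟩ := (u.neLocus v).exists_forall_not_rel (r := po)
    (Finsupp.nonempty_neLocus_iff.2 huv)
  have heq : ∀ w', po w w' → u w' = v w' := fun w' hw' => by
    by_contra hne
    exact hmax w' (Finsupp.mem_neLocus.2 hne) hw'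
  rcases (Finsupp.mem_neLocus.1 hw).lt_or_gt with h | h
  · exact Or.inl ⟨w, h, heq⟩
  · exact Or.inr (Or.inr ⟨w, h, fun w' hw' => (heq w' hw').symm⟩)

instance [IsStrictTotalOrder Pt po] : IsStrictTotalOrder (Pt →₀ ℕ) (lexLt po) where
  irrefl := lexLt_irrefl
  trans _ _ _ := lexLt_trans
  trichotomous u v h₁ h₂ := ((lexLt_trichotomous u v).resolve_left h₁).resolve_right h₂

theorem lexLe_iff_not_lexLt [IsStrictTotalOrder Pt po] {u v : Pt →₀ ℕ} :
    lexLe po u v ↔ ¬ lexLt po v u := by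
  constructor
  · rintro (rfl | h) h'
    exacts [lexLt_irrefl u h', asymm h h']
  · intro h
    rcases trichotomous_of (lexLt po) u v with h' | h' | h'
    exacts [Or.inr h', Or.inl h', (h h').elim]

theorem lexLe_antisymm [IsStrictTotalOrder Pt po] {u v : Pt →₀ ℕ}
    (h₁ : lexLe po u v) (h₂ : lexLe po v u) : u = v := by
  rcases h₁ with rfl | h₁
  · rfl
  · exact (lexLe_iff_not_lexLt.1 h₂ h₁).elim

theorem lexLt_add_right {u v : Pt →₀ ℕ} (t : Pt →₀ ℕ) (h : lexLt po u v) :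
    lexLt po (u + t) (v + t) := by
  obtain ⟨w, hw, heq⟩ := h
  exact ⟨w, by simpa using hw, fun w' hw' => by simp [heq w' hw']⟩

theorem lexLt_add_left {u v : Pt →₀ ℕ} (t : Pt →₀ ℕ) (h : lexLt po u v) :
    lexLt po (t + u) (t + v) := by
  simpa only [add_comm t] using lexLt_add_right t h

theorem lexLt_add_of_lt_of_le [IsStrictTotalOrder Pt po] {u u' v v' : Pt →₀ ℕ}
    (hu : lexLt po u u') (hv : lexLe po v v') : lexLt po (u + v) (u' + v') := by
  rcases hv with rfl | hv
  · exact lexLt_add_right v hu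
  · exact trans_of (lexLt po) (lexLt_add_right v hu) (lexLt_add_left u' hv)

theorem lexLe_add [IsStrictTotalOrder Pt po] {u u' v v' : Pt →₀ ℕ}
    (hu : lexLe po u u') (hv : lexLe po v v') : lexLe po (u + v) (u' + v') := by
  rcases hu with rfl | hu
  · rcases hv with rfl | hv
    exacts [Or.inl rfl, Or.inr (lexLt_add_left u hv)]
  · exact Or.inr (lexLt_add_of_lt_of_le hu hv)

end Lex

section LeadingMonomial

variable {K : Type*} [Field K] {po : Pt → Pt → Prop}

theorem IsLM.unique [IsStrictTotalOrder Pt po] {f : MvPolynomial Pt K} {m m' : Pt →₀ ℕ}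
    (h : IsLM po f m) (h' : IsLM po f m') : m = m' :=
  lexLe_antisymm (h'.2 m h.1) (h.2 m' h'.1)

theorem exists_isLM [IsStrictTotalOrder Pt po] {f : MvPolynomial Pt K} (hf : f ≠ 0) :
    ∃ m, IsLM po f m := by
  obtain ⟨m, hm, hmax⟩ := f.support.exists_forall_not_rel (r := lexLt po)
    (Finset.nonempty_of_ne_empty (mt MvPolynomial.support_eq_empty.1 hf))
  exact ⟨m, hm, fun m' hm' => lexLe_iff_not_lexLt.2 (hmax m' hm')⟩

theorem IsLM.mul [IsStrictTotalOrder Pt po] {f g : MvPolynomial Pt K} {mf mg : Pt →₀ ℕ}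
    (hf : IsLM po f mf) (hg : IsLM po g mg) : IsLM po (f * g) (mf + mg) := by
  refine ⟨?_, fun m hm => ?_⟩
  · rw [mem_support_iff, coeff_mul, Finset.sum_eq_single_of_mem (mf, mg)
      (Finset.HasAntidiagonal.mem_antidiagonal.2 rfl)]
    · exact mul_ne_zero (mem_support_iff.1 hf.1) (mem_support_iff.1 hg.1)
    rintro ⟨p, q⟩ hpq hne
    by_contra hc
    have hp := hf.2 p (mem_support_iff.2 (left_ne_zero_of_mul hc))
    have hq := hg.2 q (mem_support_iff.2 (right_ne_zero_of_mul hc))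
    rw [Finset.HasAntidiagonal.mem_antidiagonal] at hpq
    rcases hp with rfl | hp
    · exact hne (congrArg (Prod.mk p) (add_left_cancel hpq))
    · exact lexLt_irrefl _ (hpq ▸ lexLt_add_of_lt_of_le hp hq)
  · obtain ⟨p, hp, q, hq, rfl⟩ := Finset.mem_add.1 (support_mul f g hm)
    exact lexLe_add (hf.2 p hp) (hg.2 q hq)

end LeadingMonomial

section Binomial

variable {K : Type*} [Field K] {po : Pt → Pt → Prop}

theorem support_monomial_sub_monomial {u v : Pt →₀ ℕ} (huv : u ≠ v) :
    (monomial u (1 : K) - monomial v 1).support = {u, v} := by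
  classical
  ext m
  simp only [mem_support_iff, coeff_sub, coeff_monomial, Finset.mem_insert, Finset.mem_singleton]
  by_cases hu : u = m <;> by_cases hv : v = m <;> simp_all [eq_comm]

theorem isLM_monomial_sub_monomial_iff {u v m : Pt →₀ ℕ} (huv : u ≠ v) :
    IsLM po (monomial u (1 : K) - monomial v 1) m ↔
      (m = u ∧ lexLt po v u) ∨ (m = v ∧ lexLt po u v) := by
  simp only [IsLM, support_monomial_sub_monomial huv, Finset.mem_insert, Finset.mem_singleton,
    forall_eq_or_imp, forall_eq, lexLe]
  constructor
  · rintro ⟨rfl | rfl, h₁, h₂⟩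
    · exact Or.inl ⟨rfl, h₂.resolve_left (Ne.symm huv)⟩
    · exact Or.inr ⟨rfl, h₁.resolve_left huv⟩
  · rintro (⟨rfl, h⟩ | ⟨rfl, h⟩)
    exacts [⟨Or.inl rfl, Or.inl rfl, Or.inr h⟩, ⟨Or.inr rfl, Or.inr h, Or.inl rfl⟩]

end Binomial

noncomputable def mono2 (u v : Pt) : Pt →₀ ℕ := Finsupp.single u 1 + Finsupp.single v 1

theorem mono3_comm_left (u v w : Pt) : mono3 u v w = mono3 v u w := by
  simp only [mono3, add_comm (Finsupp.single u 1)]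

theorem mono3_comm_right (u v w : Pt) : mono3 u v w = mono3 u w v := by
  simp only [mono3, add_right_comm _ (Finsupp.single v 1)]

theorem mono2_apply_pos_iff {p q w : Pt} : 0 < mono2 p q w ↔ w = p ∨ w = q := by
  simp only [mono2, Finsupp.add_apply, Finsupp.single_apply]
  by_cases hp : p = w <;> by_cases hq : q = w <;> simp_all [eq_comm]

theorem mem_of_mono2_le_mono3 {p q x y z : Pt} (h : mono2 p q ≤ mono3 x y z) :
    (p = x ∨ p = y ∨ p = z) ∧ (q = x ∨ q = y ∨ q = z) := by
  have key : ∀ w, 0 < mono2 p q w → w = x ∨ w = y ∨ w = z := fun w hw => by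
    have hw' := hw.trans_le (h w)
    simp only [mono3, Finsupp.add_apply, Finsupp.single_apply] at hw'
    by_contra hne
    simp only [not_or] at hne
    simp [Ne.symm hne.1, Ne.symm hne.2.1, Ne.symm hne.2.2] at hw'
  exact ⟨key p (mono2_apply_pos_iff.2 (Or.inl rfl)), key q (mono2_apply_pos_iff.2 (Or.inr rfl))⟩

theorem mono2_apply_eq_zero {p q w : Pt} (hp : w ≠ p) (hq : w ≠ q) : mono2 p q w = 0 :=
  Nat.eq_zero_of_not_pos (mt mono2_apply_pos_iff.1 (by tauto))

theorem lexLt_mono2_iff {po : Pt → Pt → Prop} [IsStrictTotalOrder Pt po] {p q s t : Pt}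
    (hps : p ≠ s) (hpt : p ≠ t) (hqs : q ≠ s) (hqt : q ≠ t) (hst : s ≠ t) :
    lexLt po (mono2 p q) (mono2 s t) ↔ (po p s ∧ po q s) ∨ (po p t ∧ po q t) := by
  constructor
  · rintro ⟨w, hlt, heq⟩
    have hw : w = s ∨ w = t := mono2_apply_pos_iff.1 (Nat.zero_lt_of_lt hlt)
    have below : ∀ x, x ≠ s → x ≠ t → 0 < mono2 p q x → po x w := fun x hxs hxt hx => by
      rcases trichotomous_of po x w with h | rfl | h
      · exact h
      · rcases hw with rfl | rfl <;> contradiction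
      · have := heq x h
        rw [mono2_apply_eq_zero hxs hxt] at this
        omega
    have hp := below p hps hpt (mono2_apply_pos_iff.2 (Or.inl rfl))
    have hq := below q hqs hqt (mono2_apply_pos_iff.2 (Or.inr rfl))
    rcases hw with rfl | rfl
    exacts [Or.inl ⟨hp, hq⟩, Or.inr ⟨hp, hq⟩]
  · have top : ∀ {w}, (w = s ∨ w = t) → po p w → po q w → ¬ po w s → ¬ po w t →
        lexLt po (mono2 p q) (mono2 s t) := fun {w} hw hp hq hs ht => by
      refine ⟨w, ?_, fun w' hw' => ?_⟩
      · rw [mono2_apply_eq_zero (ne_of_irrefl' hp) (ne_of_irrefl' hq)]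
        exact mono2_apply_pos_iff.2 hw
      · have above : ∀ x, po x w → w' ≠ x := fun x hx hx' => asymm hx (hx' ▸ hw')
        rw [mono2_apply_eq_zero (above p hp) (above q hq),
          mono2_apply_eq_zero (fun e : w' = s => hs (e ▸ hw')) (fun e : w' = t => ht (e ▸ hw'))]
    rintro (⟨hp, hq⟩ | ⟨hp, hq⟩) <;> rcases trichotomous_of po s t with h | rfl | h
    · exact top (Or.inr rfl) (trans_of po hp h) (trans_of po hq h) (asymm h) (irrefl t)
    · exact (hst rfl).elim
    · exact top (Or.inl rfl) hp hq (irrefl s) (asymm h)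
    · exact top (Or.inr rfl) hp hq (asymm h) (irrefl t)
    · exact (hst rfl).elim
    · exact top (Or.inl rfl) (trans_of po hp h) (trans_of po hq h) (irrefl s) (asymm h)

section InnerMinor

variable {K : Type*} [Field K] {po : Pt → Pt → Prop}

theorem innerMinor_eq_monomial_sub_monomial (a b : Pt) :
    innerMinor K a b = monomial (mono2 a b) 1 - monomial (mono2 (a.1, b.2) (b.1, a.2)) 1 := by
  simp only [innerMinor, mono2, X, monomial_mul, one_mul]

theorem monomial_mono3 (u v w : Pt) : monomial (mono3 u v w) (1 : K) = X u * X v * X w := by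
  simp only [mono3, X, monomial_mul, one_mul]

theorem isLM_innerMinor_iff {a b : Pt} {m : Pt →₀ ℕ} (h₁ : a.1 < b.1) (h₂ : a.2 < b.2) :
    IsLM po (innerMinor K a b) m ↔
      (m = mono2 a b ∧ lexLt po (mono2 (a.1, b.2) (b.1, a.2)) (mono2 a b)) ∨
      (m = mono2 (a.1, b.2) (b.1, a.2) ∧ lexLt po (mono2 a b) (mono2 (a.1, b.2) (b.1, a.2))) := by
  refine innerMinor_eq_monomial_sub_monomial (K := K) a b ▸ isLM_monomial_sub_monomial_iff ?_
  intro h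
  have := mono2_apply_pos_iff.1 (h ▸ mono2_apply_pos_iff.2 (Or.inl rfl) : 0 < mono2 _ _ a)
  simp only [Prod.ext_iff] at this
  omega

end InnerMinor

section Reduction

variable {K : Type*} [Field K] {po : Pt → Pt → Prop}

/-- Some term `q g * g` of a standard expression of `h` has leading monomial `in(h)`, which is
then divisible by `in(g)`. -/
theorem exists_isLM_le_of_reducesToZero [IsStrictTotalOrder Pt po]
    {G : Set (MvPolynomial Pt K)} {h : MvPolynomial Pt K} {M : Pt →₀ ℕ}
    (hM : IsLM po h M) (hred : ReducesToZero po G h) :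
    ∃ g ∈ G, ∃ mg, IsLM po g mg ∧ mg ≤ M := by
  obtain ⟨F, q, hFG, rfl, hstd⟩ := hred
  have hcoeff := mem_support_iff.1 hM.1
  rw [coeff_sum] at hcoeff
  obtain ⟨g, hgF, hg⟩ := Finset.exists_ne_zero_of_sum_ne_zero hcoeff
  have hqg : q g * g ≠ 0 := fun h0 => hg (by rw [h0, coeff_zero])
  obtain ⟨mq, hmq⟩ := exists_isLM (po := po) (left_ne_zero_of_mul hqg)
  obtain ⟨mg, hmg⟩ := exists_isLM (po := po) (right_ne_zero_of_mul hqg)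
  obtain ⟨mh, hmh, hle⟩ := hstd g hgF _ (hmq.mul hmg)
  obtain rfl := hmh.unique hM
  have hM_eq : mq + mg = mh := lexLe_antisymm hle ((hmq.mul hmg).2 mh (mem_support_iff.2 hg))
  exact ⟨g, hFG hgF, mg, hmg, hM_eq ▸ le_add_self⟩

theorem support_monomial_sub_monomial_subset (u v : Pt →₀ ℕ) :
    (monomial u (1 : K) - monomial v 1).support ⊆ {u, v} :=
  (support_sub _ _ _).trans (Finset.union_subset
    ((support_monomial_subset).trans (by simp)) ((support_monomial_subset).trans (by simp)))

theorem reducesToZero_of_telescope {G : Set (MvPolynomial Pt K)}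
    {g₁ g₂ t₁ t₂ : MvPolynomial Pt K} {A B C M : Pt →₀ ℕ} (hg₁ : g₁ ∈ G) (hg₂ : g₂ ∈ G)
    (h₁ : t₁ * g₁ = monomial A 1 - monomial B 1) (h₂ : t₂ * g₂ = monomial B 1 - monomial C 1)
    (hM : IsLM po (monomial A (1 : K) - monomial C 1) M)
    (hA : lexLe po A M) (hB : lexLe po B M) (hC : lexLe po C M) :
    ReducesToZero po G (monomial A (1 : K) - monomial C 1) := by
  classical
  have hsum : monomial A 1 - monomial C 1 = t₁ * g₁ + t₂ * g₂ := by rw [h₁, h₂]; ring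
  by_cases hg : g₁ = g₂
  · subst hg
    refine ⟨{g₁}, fun _ => t₁ + t₂, by simpa using hg₁, by simp [hsum, add_mul], ?_⟩
    intro g hg m hm
    rw [Finset.mem_singleton.1 hg, add_mul, ← hsum] at hm
    exact ⟨M, hM, hM.2 m hm.1⟩
  · refine ⟨{g₁, g₂}, fun g => if g = g₁ then t₁ else t₂, ?_, ?_, ?_⟩
    · simpa [Set.insert_subset_iff] using ⟨hg₁, hg₂⟩
    · rw [Finset.sum_pair hg]
      dsimp only
      rw [if_pos rfl, if_neg (Ne.symm hg), hsum]
    · intro g hg' m hm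
      refine ⟨M, hM, ?_⟩
      dsimp only at hm
      have hsupp : m ∈ ({A, B} : Finset _) ∨ m ∈ ({B, C} : Finset _) := by
        rcases Finset.mem_insert.1 hg' with rfl | hg'
        · rw [if_pos rfl, h₁] at hm
          exact Or.inl (support_monomial_sub_monomial_subset _ _ hm.1)
        · rw [Finset.mem_singleton.1 hg', if_neg (Ne.symm hg), h₂] at hm
          exact Or.inr (support_monomial_sub_monomial_subset _ _ hm.1)
      simp only [Finset.mem_insert, Finset.mem_singleton] at hsupp
      rcases hsupp with (rfl | rfl) | (rfl | rfl) <;> assumption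

end Reduction

section SPolynomial

variable {K : Type*} [Field K] {po : Pt → Pt → Prop}

theorem isSPoly_iff [IsStrictTotalOrder Pt po] {f g sp : MvPolynomial Pt K} {mf mg : Pt →₀ ℕ}
    (hf : IsLM po f mf) (hg : IsLM po g mg) :
    IsSPoly po f g sp ↔ sp = monomial (mf ⊔ mg - mf) (f.coeff mf)⁻¹ * f
      - monomial (mf ⊔ mg - mg) (g.coeff mg)⁻¹ * g := by
  constructor
  · rintro ⟨mf', mg', hf', hg', rfl⟩
    obtain rfl := hf.unique hf'
    obtain rfl := hg.unique hg'
    rfl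
  · rintro rfl
    exact ⟨mf, mg, hf, hg, rfl⟩

theorem coeff_innerMinor_of_isLM {a b : Pt} (hf : IsLM po (innerMinor K a b) (mono2 a b)) :
    (innerMinor K a b).coeff (mono2 a b) = 1 := by
  classical
  have hf₁ := hf.1
  rw [innerMinor_eq_monomial_sub_monomial] at hf₁ ⊢
  rw [coeff_sub, coeff_monomial, coeff_monomial, if_pos rfl, if_neg, sub_zero]
  intro h
  rw [h, sub_self, support_zero] at hf₁
  exact Finset.notMem_empty _ hf₁

theorem mono2_sup_mono2_tsub {p q b : Pt} (hpq : p ≠ q) (hpb : p ≠ b) :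
    mono2 q b ⊔ mono2 p b - mono2 q b = Finsupp.single p 1 := by
  ext w
  simp only [mono2, Finsupp.tsub_apply, Finsupp.sup_apply, Finsupp.add_apply,
    Finsupp.single_apply]
  by_cases hp : p = w
  · subst hp
    simp [Ne.symm hpq, Ne.symm hpb]
  · simp only [hp, if_false]
    split_ifs <;> omega

theorem isSPoly_innerMinor_iff [IsStrictTotalOrder Pt po] {a α b : Pt} {sp : MvPolynomial Pt K}
    (haα : a ≠ α) (hab : a ≠ b) (hαb : α ≠ b)
    (hf : IsLM po (innerMinor K a b) (mono2 a b)) (hg : IsLM po (innerMinor K α b) (mono2 α b)) :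
    IsSPoly po (innerMinor K a b) (innerMinor K α b) sp ↔
      sp = X α * innerMinor K a b - X a * innerMinor K α b := by
  rw [isSPoly_iff hf hg, coeff_innerMinor_of_isLM hf, coeff_innerMinor_of_isLM hg, inv_one,
    mono2_sup_mono2_tsub (Ne.symm haα) hαb, sup_comm, mono2_sup_mono2_tsub haα hab]
  rfl

theorem X_mul_innerMinor_sub_X_mul_innerMinor (a α b : Pt) :
    X α * innerMinor K a b - X a * innerMinor K α b =
      monomial (mono3 a (α.1, b.2) (b.1, α.2)) 1 - monomial (mono3 α (a.1, b.2) (b.1, a.2)) 1 := by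
  rw [monomial_mono3, monomial_mono3, innerMinor, innerMinor]
  ring

end SPolynomial

theorem IsInnerInterval.mono {P : Finset Pt} {x₁ y₁ x₂ y₂ u₁ w₁ u₂ w₂ : ℤ}
    (h : IsInnerInterval P (x₁, y₁) (x₂, y₂)) (h₁ : x₁ ≤ u₁) (h₂ : u₁ < u₂) (h₃ : u₂ ≤ x₂)
    (h₄ : y₁ ≤ w₁) (h₅ : w₁ < w₂) (h₆ : w₂ ≤ y₂) : IsInnerInterval P (u₁, w₁) (u₂, w₂) :=
  ⟨h₂, h₅, fun _ hc₁ hc₂ hc₃ hc₄ =>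
    h.2.2 _ (h₁.trans hc₁) (hc₂.trans_le h₃) (h₄.trans hc₃) (hc₄.trans_le h₆)⟩

theorem cornersOf_eq (i j m n : ℤ) :
    cornersOf (i, j) (m, n) = ({(i, n), (m, j), (i, j), (m, n)} : Finset Pt) := by
  ext
  simp only [cornersOf, Finset.mem_insert, Finset.mem_singleton]
  tauto

section Rectangle

variable {po : Pt → Pt → Prop} [IsStrictTotalOrder Pt po] {a b : Pt}

theorem lexLt_diag_antidiag_iff (h₁ : a.1 < b.1) (h₂ : a.2 < b.2) :
    lexLt po (mono2 a b) (mono2 (a.1, b.2) (b.1, a.2)) ↔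
      (po a (a.1, b.2) ∧ po b (a.1, b.2)) ∨ (po a (b.1, a.2) ∧ po b (b.1, a.2)) := by
  refine lexLt_mono2_iff ?_ ?_ ?_ ?_ ?_ <;> simp only [ne_eq, Prod.ext_iff] <;> omega

theorem lexLt_antidiag_diag_iff (h₁ : a.1 < b.1) (h₂ : a.2 < b.2) :
    lexLt po (mono2 (a.1, b.2) (b.1, a.2)) (mono2 a b) ↔
      (po (a.1, b.2) a ∧ po (b.1, a.2) a) ∨ (po (a.1, b.2) b ∧ po (b.1, a.2) b) := by
  refine lexLt_mono2_iff ?_ ?_ ?_ ?_ ?_ <;> simp only [ne_eq, Prod.ext_iff] <;> omega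

end Rectangle

section Configuration

variable {K : Type*} [Field K] {po : Pt → Pt → Prop} {P : Finset Pt} {i j k l m n : ℤ}

theorem lexLt_antidiag_of_gcd (him : i < m) (hmk : m < k) (hjn : j < n) (hnl : n < l)
    (hgcd : ∃ mf mg : Pt →₀ ℕ, IsLM po (innerMinor K (i, j) (k, l)) mf ∧
      IsLM po (innerMinor K (m, n) (k, l)) mg ∧ ∃ w, 0 < mf w ∧ 0 < mg w) :
    lexLt po (mono2 (i, l) (k, j)) (mono2 (i, j) (k, l)) ∧
      lexLt po (mono2 (m, l) (k, n)) (mono2 (m, n) (k, l)) := by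
  obtain ⟨mf, mg, hmf, hmg, w, hwf, hwg⟩ := hgcd
  rw [isLM_innerMinor_iff (him.trans hmk) (hjn.trans hnl)] at hmf
  rw [isLM_innerMinor_iff hmk hnl] at hmg
  rcases hmf with ⟨rfl, hf⟩ | ⟨rfl, -⟩ <;> rcases hmg with ⟨rfl, hg⟩ | ⟨rfl, -⟩
  · exact ⟨hf, hg⟩
  all_goals
    rw [mono2_apply_pos_iff] at hwf hwg
    simp only [Prod.ext_iff] at hwf hwg
    omega

theorem forall_isSPoly_reducesToZero_iff [IsStrictTotalOrder Pt po] {G : Set (MvPolynomial Pt K)}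
    (him : i < m) (hmk : m < k) (hjn : j < n) (hnl : n < l)
    (hf : lexLt po (mono2 (i, l) (k, j)) (mono2 (i, j) (k, l)))
    (hg : lexLt po (mono2 (m, l) (k, n)) (mono2 (m, n) (k, l))) :
    (∀ sp, IsSPoly po (innerMinor K (i, j) (k, l)) (innerMinor K (m, n) (k, l)) sp →
        ReducesToZero po G sp) ↔
      ReducesToZero po G
        (monomial (mono3 (i, j) (m, l) (k, n)) 1 - monomial (mono3 (m, n) (i, l) (k, j)) 1) := by
  have hfLM : IsLM po (innerMinor K (i, j) (k, l)) (mono2 (i, j) (k, l)) :=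
    (isLM_innerMinor_iff (him.trans hmk) (hjn.trans hnl)).2 (Or.inl ⟨rfl, hf⟩)
  have hgLM : IsLM po (innerMinor K (m, n) (k, l)) (mono2 (m, n) (k, l)) :=
    (isLM_innerMinor_iff hmk hnl).2 (Or.inl ⟨rfl, hg⟩)
  simp only [isSPoly_innerMinor_iff (by simp; omega) (by simp; omega) (by simp; omega) hfLM hgLM,
    forall_eq, X_mul_innerMinor_sub_X_mul_innerMinor]

theorem reducesToZero_iff_of_lexLt [IsStrictTotalOrder Pt po]
    (him : i < m) (hmk : m < k) (hjn : j < n) (hnl : n < l)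
    (hab : IsInnerInterval P (i, j) (k, l))
    (hf : lexLt po (mono2 (i, l) (k, j)) (mono2 (i, j) (k, l)))
    (hlt : lexLt po (mono3 (i, j) (m, l) (k, n)) (mono3 (m, n) (i, l) (k, j))) :
    ReducesToZero po (minorsSet K P)
        (monomial (mono3 (i, j) (m, l) (k, n)) 1 - monomial (mono3 (m, n) (i, l) (k, j)) 1) ↔
      lexLt po (mono2 (m, j) (k, n)) (mono2 (m, n) (k, j)) ∨
        lexLt po (mono2 (i, n) (m, l)) (mono2 (i, l) (m, n)) := by
  have hM := (isLM_monomial_sub_monomial_iff (K := K) (ne_of_irrefl hlt)).2 (Or.inr ⟨rfl, hlt⟩)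
  constructor
  · intro hred
    obtain ⟨_, ⟨u, v, ⟨huv₁, huv₂, -⟩, rfl⟩, mg, hmg, hle⟩ :=
      exists_isLM_le_of_reducesToZero hM hred
    rcases (isLM_innerMinor_iff huv₁ huv₂).1 hmg with ⟨rfl, -⟩ | ⟨rfl, hanti⟩
    · obtain ⟨hu, hv⟩ := mem_of_mono2_le_mono3 hle
      simp only [Prod.ext_iff] at hu hv
      omega
    · obtain ⟨hu, hv⟩ := mem_of_mono2_le_mono3 hle
      have : (u = (m, j) ∧ v = (k, n)) ∨ (u = (i, n) ∧ v = (m, l)) ∨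
          (u = (i, j) ∧ v = (k, l)) := by
        simp only [Prod.ext_iff] at hu hv ⊢
        omega
      rcases this with ⟨rfl, rfl⟩ | ⟨rfl, rfl⟩ | ⟨rfl, rfl⟩
      exacts [Or.inl hanti, Or.inr hanti, (asymm hanti hf).elim]
  · rintro (h | h)
    · refine reducesToZero_of_telescope (t₁ := X (k, n)) (t₂ := X (i, l))
        (B := mono3 (m, j) (k, n) (i, l))
        ⟨_, _, hab.mono le_rfl him hmk.le le_rfl (hjn.trans hnl) le_rfl, rfl⟩
        ⟨_, _, hab.mono him.le hmk le_rfl le_rfl hjn hnl.le, rfl⟩ ?_ ?_ hM (Or.inr hlt) ?_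
        (Or.inl rfl)
      · simp only [monomial_mono3, innerMinor]; ring
      · simp only [monomial_mono3, innerMinor]; ring
      · rw [mono3_comm_right (m, n)]
        exact Or.inr (lexLt_add_right _ h)
    · refine reducesToZero_of_telescope (t₁ := X (m, l)) (t₂ := X (k, j))
        (B := mono3 (i, n) (m, l) (k, j))
        ⟨_, _, hab.mono le_rfl (him.trans hmk) le_rfl le_rfl hjn hnl.le, rfl⟩
        ⟨_, _, hab.mono le_rfl him hmk.le hjn.le hnl le_rfl, rfl⟩ ?_ ?_ hM (Or.inr hlt) ?_
        (Or.inl rfl)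
      · simp only [monomial_mono3, innerMinor]; ring
      · simp only [monomial_mono3, innerMinor]; ring
      · rw [mono3_comm_left (m, n)]
        exact Or.inr (lexLt_add_right _ h)

theorem reducesToZero_iff_of_lexGt [IsStrictTotalOrder Pt po]
    (him : i < m) (hmk : m < k) (hjn : j < n) (hnl : n < l)
    (hab : IsInnerInterval P (i, j) (k, l))
    (hg : lexLt po (mono2 (m, l) (k, n)) (mono2 (m, n) (k, l)))
    (hgt : lexLt po (mono3 (m, n) (i, l) (k, j)) (mono3 (i, j) (m, l) (k, n))) :
    ReducesToZero po (minorsSet K P)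
        (monomial (mono3 (i, j) (m, l) (k, n)) 1 - monomial (mono3 (m, n) (i, l) (k, j)) 1) ↔
      lexLt po (mono2 (i, l) (m, j)) (mono2 (i, j) (m, l)) ∨
        lexLt po (mono2 (i, n) (k, j)) (mono2 (i, j) (k, n)) := by
  have hM := (isLM_monomial_sub_monomial_iff (K := K) (ne_of_irrefl' hgt)).2 (Or.inl ⟨rfl, hgt⟩)
  constructor
  · intro hred
    obtain ⟨_, ⟨u, v, ⟨huv₁, huv₂, -⟩, rfl⟩, mg, hmg, hle⟩ :=
      exists_isLM_le_of_reducesToZero hM hred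
    rcases (isLM_innerMinor_iff huv₁ huv₂).1 hmg with ⟨rfl, hdiag⟩ | ⟨rfl, hanti⟩
    · obtain ⟨hu, hv⟩ := mem_of_mono2_le_mono3 hle
      have : (u = (i, j) ∧ v = (m, l)) ∨ (u = (i, j) ∧ v = (k, n)) := by
        simp only [Prod.ext_iff] at hu hv ⊢
        omega
      rcases this with ⟨rfl, rfl⟩ | ⟨rfl, rfl⟩
      exacts [Or.inl hdiag, Or.inr hdiag]
    · obtain ⟨hu, hv⟩ := mem_of_mono2_le_mono3 hle
      have : u = (m, n) ∧ v = (k, l) := by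
        simp only [Prod.ext_iff] at hu hv ⊢
        omega
      obtain ⟨rfl, rfl⟩ := this
      exact (asymm hanti hg).elim
  · rintro (h | h)
    · refine reducesToZero_of_telescope (t₁ := X (k, n)) (t₂ := X (i, l))
        (B := mono3 (i, l) (m, j) (k, n))
        ⟨_, _, hab.mono le_rfl him hmk.le le_rfl (hjn.trans hnl) le_rfl, rfl⟩
        ⟨_, _, hab.mono him.le hmk le_rfl le_rfl hjn hnl.le, rfl⟩ ?_ ?_ hM (Or.inl rfl) ?_
        (Or.inr hgt)
      · simp only [monomial_mono3, innerMinor]; ring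
      · simp only [monomial_mono3, innerMinor]; ring
      · exact Or.inr (lexLt_add_right _ h)
    · refine reducesToZero_of_telescope (t₁ := X (m, l)) (t₂ := X (k, j))
        (B := mono3 (i, n) (k, j) (m, l))
        ⟨_, _, hab.mono le_rfl (him.trans hmk) le_rfl le_rfl hjn hnl.le, rfl⟩
        ⟨_, _, hab.mono le_rfl him hmk.le hjn.le hnl le_rfl, rfl⟩ ?_ ?_ hM (Or.inl rfl) ?_
        (Or.inr hgt)
      · simp only [monomial_mono3, innerMinor]; ring
      · simp only [monomial_mono3, innerMinor]; ring
      · rw [mono3_comm_right (i, j)]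
        exact Or.inr (lexLt_add_right _ h)

end Configuration

theorem sPoly_reducesToZero_iff_case1_general
    (K : Type*) [Field K] (P : Finset Pt)
    (i j k l m n : ℤ)
    (a b c d α β γ δ h r : Pt)
    (ha : a = (i, j)) (hb : b = (k, l)) (hc : c = (i, l)) (hd : d = (k, j))
    (hα : α = (m, n)) (hβ : β = b) (hγ : γ = (m, l)) (hδ : δ = (k, n))
    (hh : h = (m, j)) (hr : r = (i, n))
    (him : i < m) (hmk : m < k) (hjn : j < n) (hnl : n < l)
    (hab : IsInnerInterval P a b)
    (po : Pt → Pt → Prop) (hpo : IsStrictTotalOrder Pt po)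
    (hgcd : ∃ mf mg : Pt →₀ ℕ, IsLM po (innerMinor K a b) mf ∧
      IsLM po (innerMinor K α β) mg ∧ ∃ w, 0 < mf w ∧ 0 < mg w) :
    (∀ sp, IsSPoly po (innerMinor K a b) (innerMinor K α β) sp →
        ReducesToZero po (minorsSet K P) sp) ↔
      ((lexLt po (mono3 a γ δ) (mono3 α c d) ∧
          ((po h α ∧ po δ α) ∨ (po h d ∧ po δ d))) ∨
       (lexLt po (mono3 a γ δ) (mono3 α c d) ∧
          (∃ u v : Pt, IsInnerInterval P u v ∧ cornersOf u v = ({r, h, a, α} : Finset Pt)) ∧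
          ((po r α ∧ po γ α) ∨ (po r c ∧ po γ c))) ∨
       (lexLt po (mono3 α c d) (mono3 a γ δ) ∧
          ((po h a ∧ po c a) ∨ (po h γ ∧ po c γ))) ∨
       (lexLt po (mono3 α c d) (mono3 a γ δ) ∧
          (∃ u v : Pt, IsInnerInterval P u v ∧ cornersOf u v = ({r, h, a, α} : Finset Pt)) ∧
          ((po r a ∧ po d a) ∨ (po r δ ∧ po d δ)))) := by
  subst hβ hc hd hγ hδ hh hr ha hb hα
  obtain ⟨hf, hg⟩ := lexLt_antidiag_of_gcd him hmk hjn hnl hgcd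
  rw [forall_isSPoly_reducesToZero_iff him hmk hjn hnl hf hg]
  have hcorn : ∃ u v : Pt, IsInnerInterval P u v ∧
      cornersOf u v = ({(i, n), (m, j), (i, j), (m, n)} : Finset Pt) :=
    ⟨(i, j), (m, n), hab.mono le_rfl him hmk.le le_rfl hjn hnl.le, cornersOf_eq i j m n⟩
  rcases trichotomous_of (lexLt po) (mono3 (i, j) (m, l) (k, n)) (mono3 (m, n) (i, l) (k, j))
    with hlt | heq | hgt
  · rw [reducesToZero_iff_of_lexLt him hmk hjn hnl hab hf hlt,
      lexLt_diag_antidiag_iff (a := (m, j)) (b := (k, n)) hmk hjn,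
      lexLt_diag_antidiag_iff (a := (i, n)) (b := (m, l)) him hnl]
    simp only [hlt, asymm hlt, hcorn, true_and, false_and, or_false]
    tauto
  · have hle : mono2 (i, j) (m, l) ≤ mono3 (i, j) (m, l) (k, n) := le_self_add
    have := (mem_of_mono2_le_mono3 (heq ▸ hle)).1
    simp only [Prod.ext_iff] at this
    omega
  · rw [reducesToZero_iff_of_lexGt him hmk hjn hnl hab hg hgt,
      lexLt_antidiag_diag_iff (a := (i, j)) (b := (m, l)) him (hjn.trans hnl),
      lexLt_antidiag_diag_iff (a := (i, j)) (b := (k, n)) (him.trans hmk) hjn]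
    simp only [hgt, asymm hgt, hcorn, true_and, false_and, false_or]
    tauto

theorem sPoly_reducesToZero_iff_case1
    (K : Type*) [Field K] (P : Finset Pt) (hP : P.Nonempty)
    (i j k l m n : ℤ)
    (a b c d α β γ δ h r : Pt)
    (ha : a = (i, j)) (hb : b = (k, l)) (hc : c = (i, l)) (hd : d = (k, j))
    (hα : α = (m, n)) (hβ : β = b) (hγ : γ = (m, l)) (hδ : δ = (k, n))
    (hh : h = (m, j)) (hr : r = (i, n))
    (him : i < m) (hmk : m < k) (hjn : j < n) (hnl : n < l)
    (hab : IsInnerInterval P a b) (hαβ : IsInnerInterval P α β)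
    (po : Pt → Pt → Prop) (hpo : IsStrictTotalOrder Pt po)
    (hgcd : ∃ mf mg : Pt →₀ ℕ, IsLM po (innerMinor K a b) mf ∧
      IsLM po (innerMinor K α β) mg ∧ ∃ w, 0 < mf w ∧ 0 < mg w) :
    (∀ sp, IsSPoly po (innerMinor K a b) (innerMinor K α β) sp →
        ReducesToZero po (minorsSet K P) sp) ↔
      ((lexLt po (mono3 a γ δ) (mono3 α c d) ∧
          ((po h α ∧ po δ α) ∨ (po h d ∧ po δ d))) ∨
       (lexLt po (mono3 a γ δ) (mono3 α c d) ∧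
          (∃ u v : Pt, IsInnerInterval P u v ∧ cornersOf u v = ({r, h, a, α} : Finset Pt)) ∧
          ((po r α ∧ po γ α) ∨ (po r c ∧ po γ c))) ∨
       (lexLt po (mono3 α c d) (mono3 a γ δ) ∧
          ((po h a ∧ po c a) ∨ (po h γ ∧ po c γ))) ∨
       (lexLt po (mono3 α c d) (mono3 a γ δ) ∧
          (∃ u v : Pt, IsInnerInterval P u v ∧ cornersOf u v = ({r, h, a, α} : Finset Pt)) ∧
          ((po r a ∧ po d a) ∨ (po r δ ∧ po d δ)))) :=
  sPoly_reducesToZero_iff_case1_general K P i j k l m n a b c d α β γ δ h r ha hb hc hd hα hβ hγ hδ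
    hh hr him hmk hjn hnl hab po hpo hgcd

end ClosedPathPaper
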